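/- Let h be a Hermitian form of signature (2n, 2) on ℂ^{2n+2} and a a compatible complex symplectic form (arising as h_ℂ and a_ℂ from the quaternionic form h_ℍ of signature (n,1)). Suppose ℂ^{2n+2} = V ⊕ V·j where V is the i-eigenspace of a right-ℍ-linear complex structure J preserving h_ℍ. Then the restriction of h to V is a non-degenerate Hermitian form of signature (n, 1). -/

import Mathlib

/-!
On the `i`-eigenspace `V` of the isometry `J`, the values of `h_ℍ` commute with `i`, so they
are complex and `h_ℂ` restricts to a Hermitian form on `V`.
Over `ℝ`, `ℍ^{n+1} = V ⊕ V·j` with `h_ℂ(v + wj, v + wj) = h_ℂ(v,v) + conj h_ℂ(w,w)`; hence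
`h_ℂ|V` is nondegenerate, `dim_ℂ V = n + 1`, and `V` contains a negative vector because
`e_n = v + wj` does. Two orthogonal vectors of norm `-1` in `V` cannot exist: some nonzero
quaternionic combination of them has vanishing last coordinate, where `h_ℍ ≥ 0`. So an
orthonormal basis of `h_ℂ|V`, which exists by Gram–Schmidt, has exactly one negative vector.
-/

/-- The embedding ℂ → ℍ sending `z` to the quaternion `z.re + z.im·i`. -/
noncomputable def toQ (z : ℂ) : Quaternion ℝ := ⟨z.re, z.im, 0, 0⟩

/-- The quaternion `i`. -/
noncomputable def iq : Quaternion ℝ := ⟨0, 1, 0, 0⟩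

/-- Right multiplication of a vector of `ℍ^{n+1}` by a quaternion. -/
noncomputable def rmul {n : ℕ} (x : Fin (n + 1) → Quaternion ℝ) (q : Quaternion ℝ) :
    Fin (n + 1) → Quaternion ℝ := fun l => x l * q

/-- The quaternionic Hermitian form of signature `(n,1)`. -/
noncomputable def hH (n : ℕ) (X Y : Fin (n + 1) → Quaternion ℝ) : Quaternion ℝ :=
  ∑ l : Fin (n + 1), if (l : ℕ) < n then star (X l) * Y l else -(star (X l) * Y l)

/-- The complex part of a quaternion, so that `h_ℂ = c1 ∘ h_ℍ`. -/
noncomputable def c1 (q : Quaternion ℝ) : ℂ := ⟨q.re, q.imI⟩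

open Quaternion Module

namespace LinearMap

variable {M : Type*} [AddCommGroup M] [Module ℂ M] {B : M →ₗ⋆[ℂ] M →ₗ[ℂ] ℂ}

/-- Polarization. -/
lemma exists_apply_self_ne_zero (hB0 : B ≠ 0) : ∃ x, B x x ≠ 0 := by
  by_contra! h
  refine hB0 (ext₂ fun x y => ?_)
  have h₁ : B x y + B y x = 0 := by simpa [h] using h (x + y)
  have h₂ : Complex.I * B x y - Complex.I * B y x = 0 := by
    simpa [h, sub_eq_add_neg] using h (x + Complex.I • y)
  simp only [zero_apply]
  linear_combination (-Complex.I / 2) * (Complex.I * h₁ + h₂) + B x y * Complex.I_sq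

/-- Gram–Schmidt for Hermitian forms: split off a non-isotropic `x` against `ker (B x)`. -/
theorem IsSymm.exists_orthogonal_basis [FiniteDimensional ℂ M] (hB : B.IsSymm) :
    ∃ v : Basis (Fin (finrank ℂ M)) ℂ M, B.IsOrthoᵢ v := by
  suffices ∀ d, finrank ℂ M = d → ∃ v : Basis (Fin d) ℂ M, B.IsOrthoᵢ v from this _ rfl
  intro d hd
  induction d generalizing M with
  | zero => exact ⟨basisOfFinrankZero hd, fun _ _ _ => map_zero _⟩
  | succ d ih =>
  obtain rfl | hB0 := eq_or_ne B 0
  · exact ⟨(Module.finBasis ℂ M).reindex (finCongr hd), fun _ _ _ => rfl⟩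
  obtain ⟨x, hx⟩ := exists_apply_self_ne_zero hB0
  have hW : finrank ℂ (ker (B x)) = d := by
    have := Module.Dual.finrank_ker_add_one_of_ne_zero (f := B x) (by rintro h; simp [h] at hx)
    omega
  obtain ⟨v, hv⟩ := ih (hB.domRestrict _) hW
  let b := Basis.mkFinCons x v
    (fun c w hw hcw => by
      have := congrArg (B x) hcw
      rw [map_add, map_smul, mem_ker.1 hw, map_zero, add_zero, smul_eq_mul] at this
      exact (mul_eq_zero.1 this).resolve_right hx)
    (fun y => ⟨-(B x y / B x x), by
      rw [mem_ker, map_add, map_smul, smul_eq_mul]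
      field_simp
      ring⟩)
  refine ⟨b, ?_⟩
  rw [Basis.coe_mkFinCons]
  intro i j hij
  induction i using Fin.cases <;> induction j using Fin.cases
  · exact absurd rfl hij
  · exact (v _).2
  · exact hB.eq_iff.1 (v _).2
  · exact hv (ne_of_apply_ne _ hij)

lemma IsSymm.ofReal_re_apply_self (hB : B.IsSymm) (x : M) : ((B x x).re : ℂ) = B x x :=
  Complex.conj_eq_iff_re.1 (hB.eq x x)

theorem IsSymm.exists_orthogonal_basis_sign [FiniteDimensional ℂ M] (hB : B.IsSymm)
    (hB' : B.SeparatingLeft) : ∃ v : Basis (Fin (finrank ℂ M)) ℂ M,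
      B.IsOrthoᵢ v ∧ ∀ i, B (v i) (v i) = 1 ∨ B (v i) (v i) = -1 := by
  obtain ⟨v, hv⟩ := hB.exists_orthogonal_basis
  set r : Fin (finrank ℂ M) → ℝ := fun i => (B (v i) (v i)).re
  have hr : ∀ i, r i ≠ 0 := fun i h => hv.not_isOrtho_basis_self_of_separatingLeft hB' i
    (by rw [← hB.ofReal_re_apply_self, show (B (v i) (v i)).re = 0 from h, Complex.ofReal_zero])
  have hs : ∀ i, IsUnit (((√|r i|)⁻¹ : ℝ) : ℂ) := fun i => by simp [hr i]
  refine ⟨v.isUnitSMul hs, fun i j hij => ?_, fun i => ?_⟩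
  · change B _ _ = 0
    rw [Basis.isUnitSMul_apply, Basis.isUnitSMul_apply, map_smulₛₗ₂, map_smul, hv hij,
      smul_zero, smul_zero]
  · rw [Basis.isUnitSMul_apply, map_smulₛₗ₂, map_smul, ← hB.ofReal_re_apply_self]
    have hsign : (√|r i|)⁻¹ * ((√|r i|)⁻¹ * r i) = r i / |r i| := by
      rw [← mul_assoc, ← mul_inv, Real.mul_self_sqrt (abs_nonneg _), inv_mul_eq_div]
    simp only [smul_eq_mul, Complex.conj_ofReal, ← Complex.ofReal_mul]
    rw [show (B (v i) (v i)).re = r i from rfl, hsign]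
    rcases (hr i).lt_or_gt with h | h
    · simp [abs_of_neg h, h.ne]
    · simp [abs_of_pos h, h.ne']

lemma IsOrthoᵢ.apply_self_eq_sum {ι : Type*} [Fintype ι] {v : Basis ι ℂ M} (hv : B.IsOrthoᵢ v)
    (x : M) : B x x = ∑ i, starRingEnd ℂ (v.repr x i) * v.repr x i * B (v i) (v i) := by
  conv_lhs => rw [← v.sum_repr x]
  simp only [map_sum, sum_apply, map_smulₛₗ₂, map_smul, smul_eq_mul]
  refine Finset.sum_congr rfl fun i _ => ?_
  rw [Finset.sum_eq_single i (fun j _ hji => by simp [hv hji]) (by simp)]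
  ring

theorem IsSymm.exists_basis_signature_index_one [FiniteDimensional ℂ M] {n : ℕ}
    (hB : B.IsSymm) (hB' : B.SeparatingLeft) (hdim : finrank ℂ M = n + 1)
    (hneg : ∃ x, (B x x).re < 0) (hpair : ∀ x y, B x x = -1 → B y y = -1 → B x y ≠ 0) :
    ∃ v : Basis (Fin (n + 1)) ℂ M,
      ∀ k l, B (v k) (v l) = if k = l then (if (k : ℕ) < n then 1 else -1) else 0 := by
  obtain ⟨v, hv, hsign⟩ := hB.exists_orthogonal_basis_sign hB'
  set w := v.reindex (finCongr hdim)
  have hw : B.IsOrthoᵢ w := fun i j hij => by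
    change B (w i) (w j) = 0
    simp only [w, Basis.reindex_apply]
    exact hv ((finCongr hdim).symm.injective.ne hij)
  have hwsign : ∀ i, B (w i) (w i) = 1 ∨ B (w i) (w i) = -1 := fun i => by simpa [w] using hsign _
  obtain ⟨i₀, hi₀⟩ : ∃ i₀, B (w i₀) (w i₀) = -1 := by
    by_contra! h
    obtain ⟨x, hx⟩ := hneg
    have hpos : ∀ i, B (w i) (w i) = 1 := fun i => (hwsign i).resolve_right (h i)
    rw [hw.apply_self_eq_sum, Complex.re_sum] at hx
    refine hx.not_ge (Finset.sum_nonneg fun i _ => ?_)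
    rw [hpos, mul_one, Complex.conj_mul', ← Complex.ofReal_pow, Complex.ofReal_re]
    positivity
  have huniq : ∀ i, B (w i) (w i) = -1 → i = i₀ := fun i hi => by
    by_contra h
    exact hpair _ _ hi hi₀ (hw h)
  refine ⟨w.reindex (Equiv.swap i₀ (Fin.last n)), fun k l => ?_⟩
  simp only [Basis.reindex_apply, Equiv.symm_swap]
  split_ifs with hkl hk
  · subst hkl
    have hk' : Equiv.swap i₀ (Fin.last n) k ≠ i₀ := by
      rw [Ne, Equiv.swap_apply_eq_iff, Equiv.swap_apply_left]
      rintro rfl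
      simp at hk
    exact (hwsign _).resolve_right fun h => hk' (huniq _ h)
  · subst hkl
    rw [show k = Fin.last n from Fin.ext (by have := k.isLt; simp; omega),
      Equiv.swap_apply_right, hi₀]
  · exact hw ((Equiv.swap _ _).injective.ne hkl)

end LinearMap

lemma exists_ne_zero_mul_add_mul_eq_zero {D : Type*} [DivisionRing D] (a b : D) :
    ∃ p q : D, (p, q) ≠ 0 ∧ a * p + b * q = 0 := by
  rcases eq_or_ne a 0 with rfl | ha
  · exact ⟨1, 0, by simp, by simp⟩
  · exact ⟨-(a⁻¹ * b), 1, by simp, by rw [mul_neg, ← mul_assoc, mul_inv_cancel₀ ha]; simp⟩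

lemma Quaternion.re_sum {ι : Type*} (s : Finset ι) (f : ι → ℍ[ℝ]) :
    (∑ i ∈ s, f i).re = ∑ i ∈ s, (f i).re :=
  map_sum (QuaternionAlgebra.reₗ (-1 : ℝ) 0 (-1)) f s

@[simp] lemma iq_re : iq.re = 0 := rfl
@[simp] lemma iq_imI : iq.imI = 1 := rfl
@[simp] lemma iq_imJ : iq.imJ = 0 := rfl
@[simp] lemma iq_imK : iq.imK = 0 := rfl

@[simp] lemma toQ_re (z : ℂ) : (toQ z).re = z.re := rfl
@[simp] lemma toQ_imI (z : ℂ) : (toQ z).imI = z.im := rfl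
@[simp] lemma toQ_imJ (z : ℂ) : (toQ z).imJ = 0 := rfl
@[simp] lemma toQ_imK (z : ℂ) : (toQ z).imK = 0 := rfl

@[simp] lemma c1_re (q : ℍ[ℝ]) : (c1 q).re = q.re := rfl
@[simp] lemma c1_im (q : ℍ[ℝ]) : (c1 q).im = q.imI := rfl

lemma iq_mul_iq : iq * iq = -1 := by
  ext <;> simp [Quaternion.re_mul, Quaternion.imI_mul, Quaternion.imJ_mul, Quaternion.imK_mul]

noncomputable def toQAlgHom : ℂ →ₐ[ℝ] ℍ[ℝ] := Complex.liftAux iq iq_mul_iq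

@[simp] lemma toQAlgHom_apply (z : ℂ) : toQAlgHom z = toQ z := by
  ext <;> simp [toQAlgHom, Complex.liftAux_apply]

@[simp] lemma toQ_zero : toQ 0 = 0 := by
  simp only [← toQAlgHom_apply, map_zero]

lemma toQ_neg_one : toQ (-1) = -1 := by
  simp only [← toQAlgHom_apply, map_neg, map_one]

lemma toQ_I : toQ Complex.I = iq := by
  ext <;> simp

lemma star_toQ (z : ℂ) : star (toQ z) = toQ (starRingEnd ℂ z) := by
  ext <;> simp

lemma iq_mul_star_iq : iq * star iq = 1 := by
  ext <;> simp [Quaternion.re_mul, Quaternion.imI_mul, Quaternion.imJ_mul, Quaternion.imK_mul]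

noncomputable def jq : ℍ[ℝ] := ⟨0, 0, 1, 0⟩

@[simp] lemma jq_re : jq.re = 0 := rfl
@[simp] lemma jq_imI : jq.imI = 0 := rfl
@[simp] lemma jq_imJ : jq.imJ = 1 := rfl
@[simp] lemma jq_imK : jq.imK = 0 := rfl

lemma jq_mul_jq : jq * jq = -1 := by
  ext <;> simp [Quaternion.re_mul, Quaternion.imI_mul, Quaternion.imJ_mul, Quaternion.imK_mul]

lemma star_jq : star jq = -jq := by
  ext <;> simp

lemma toQ_mul_jq (z : ℂ) : toQ z * jq = jq * toQ (starRingEnd ℂ z) := by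
  ext <;> simp [Quaternion.re_mul, Quaternion.imI_mul, Quaternion.imJ_mul,
    Quaternion.imK_mul]

lemma star_jq_mul_toQ_mul_jq (z : ℂ) : star jq * (toQ z * jq) = toQ (starRingEnd ℂ z) := by
  rw [toQ_mul_jq, ← mul_assoc, star_jq, neg_mul, jq_mul_jq, neg_neg, one_mul]

@[simp] lemma c1_toQ (z : ℂ) : c1 (toQ z) = z := rfl

lemma c1_add (p q : ℍ[ℝ]) : c1 (p + q) = c1 p + c1 q := rfl

lemma c1_star (q : ℍ[ℝ]) : c1 (star q) = starRingEnd ℂ (c1 q) := by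
  apply Complex.ext <;> simp

lemma c1_toQ_mul (z : ℂ) (q : ℍ[ℝ]) : c1 (toQ z * q) = z * c1 q := by
  apply Complex.ext <;> simp [Quaternion.re_mul, Quaternion.imI_mul]

lemma c1_mul_toQ (q : ℍ[ℝ]) (z : ℂ) : c1 (q * toQ z) = c1 q * z := by
  apply Complex.ext <;> simp [Quaternion.re_mul, Quaternion.imI_mul]

lemma c1_toQ_mul_jq (z : ℂ) : c1 (toQ z * jq) = 0 := by
  apply Complex.ext <;> simp [Quaternion.re_mul, Quaternion.imI_mul]

lemma eq_toQ_c1_of_commute {q : ℍ[ℝ]} (h : Commute iq q) : q = toQ (c1 q) := by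
  have hJ := congrArg QuaternionAlgebra.imJ h.eq
  have hK := congrArg QuaternionAlgebra.imK h.eq
  simp [Quaternion.imJ_mul, Quaternion.imK_mul] at hJ hK
  ext <;> simp <;> linarith

abbrev QVec (n : ℕ) := Fin (n + 1) → ℍ[ℝ]

section QVec

variable {n : ℕ}

/-- `ℍ^{n+1} ≅ ℂ^{2n+2}`, with `ℂ ⊂ ℍ` acting on the right. -/
noncomputable instance : Module ℂ (QVec n) :=
  Module.compHom _ (toQAlgHom.toRingHom.toOpposite fun z w => (Commute.all z w).map _)

lemma smul_def (z : ℂ) (x : QVec n) : z • x = rmul x (toQ z) := by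
  funext l
  exact congrArg (x l * ·) (toQAlgHom_apply z)

instance : IsScalarTower ℝ ℂ (QVec n) where
  smul_assoc r z x := by
    funext l
    simp only [smul_def, rmul, Pi.smul_apply, ← toQAlgHom_apply, map_smul, mul_smul_comm]

instance : FiniteDimensional ℂ (QVec n) := .of_restrictScalars_finite ℝ ℂ _

lemma finrank_real_qVec : finrank ℝ (QVec n) = 4 * (n + 1) := by
  rw [Module.finrank_pi_fintype]
  simp [Quaternion.finrank_eq_four, mul_comm]

@[simp] lemma zero_rmul (q : ℍ[ℝ]) : rmul (0 : QVec n) q = 0 := by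
  funext l; simp [rmul]

lemma rmul_rmul (x : QVec n) (p q : ℍ[ℝ]) : rmul (rmul x p) q = rmul x (p * q) := by
  funext l; simp [rmul, mul_assoc]

lemma rmul_jq_smul (z : ℂ) (x : QVec n) : rmul (z • x) jq = starRingEnd ℂ z • rmul x jq := by
  simp only [smul_def, rmul_rmul, toQ_mul_jq]

lemma rmul_jq_rmul_jq (x : QVec n) : rmul (rmul x jq) jq = -x := by
  funext l; simp [rmul, mul_assoc, jq_mul_jq]

end QVec

section hH

variable {n : ℕ}

lemma hH_add_left (x y z : QVec n) : hH n (x + y) z = hH n x z + hH n y z := by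
  simp only [hH, ← Finset.sum_add_distrib]
  refine Finset.sum_congr rfl fun l _ => ?_
  split_ifs <;> simp only [Pi.add_apply, star_add, add_mul, neg_add]

lemma hH_add_right (x y z : QVec n) : hH n x (y + z) = hH n x y + hH n x z := by
  simp only [hH, ← Finset.sum_add_distrib]
  refine Finset.sum_congr rfl fun l _ => ?_
  split_ifs <;> simp only [Pi.add_apply, mul_add, neg_add]

lemma hH_rmul_left (x y : QVec n) (q : ℍ[ℝ]) : hH n (rmul x q) y = star q * hH n x y := by
  simp only [hH, Finset.mul_sum]
  refine Finset.sum_congr rfl fun l _ => ?_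
  split_ifs <;> simp [rmul, mul_assoc]

lemma hH_rmul_right (x y : QVec n) (q : ℍ[ℝ]) : hH n x (rmul y q) = hH n x y * q := by
  simp only [hH, Finset.sum_mul]
  refine Finset.sum_congr rfl fun l _ => ?_
  split_ifs <;> simp [rmul, mul_assoc]

lemma star_hH (x y : QVec n) : star (hH n x y) = hH n y x := by
  simp only [hH, star_sum]
  refine Finset.sum_congr rfl fun l _ => ?_
  split_ifs <;> simp

lemma hH_self_re (x : QVec n) :
    (hH n x x).re = ∑ l : Fin (n + 1), if (l : ℕ) < n then normSq (x l) else -normSq (x l) := by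
  simp only [hH, Quaternion.re_sum]
  refine Finset.sum_congr rfl fun l _ => ?_
  split_ifs <;> simp [star_mul_self]

lemma eq_zero_of_forall_hH_eq_zero {x : QVec n} (h : ∀ y, hH n x y = 0) : x = 0 := by
  have hsum : (hH n x fun l => if (l : ℕ) < n then x l else -x l).re = ∑ l, normSq (x l) := by
    simp only [hH, Quaternion.re_sum]
    refine Finset.sum_congr rfl fun l _ => ?_
    split_ifs <;> simp [star_mul_self]
  rw [h, Quaternion.re_zero, eq_comm] at hsum
  rw [Finset.sum_eq_zero_iff_of_nonneg fun _ _ => normSq_nonneg] at hsum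
  funext l
  exact normSq_eq_zero.1 (hsum l (Finset.mem_univ l))

lemma hH_self_re_nonneg_of_last_eq_zero {x : QVec n} (h : x (Fin.last n) = 0) :
    0 ≤ (hH n x x).re := by
  rw [hH_self_re]
  refine Finset.sum_nonneg fun l _ => ?_
  split_ifs with hl
  · exact normSq_nonneg
  · rw [show l = Fin.last n from Fin.ext (by have := l.isLt; simp; omega), h]
    simp

lemma hH_single_last : hH n (Pi.single (Fin.last n) 1) (Pi.single (Fin.last n) 1) = -1 := by
  rw [hH, Finset.sum_eq_single (Fin.last n) (fun l _ hl => by simp [hl]) (by simp)]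
  simp

/-- Some nonzero combination `u₁ p + u₂ q` has vanishing last coordinate, where `h_ℍ ≥ 0`. -/
lemma not_hH_negative_orthonormal_pair {u₁ u₂ : QVec n} (h₁ : hH n u₁ u₁ = -1)
    (h₂ : hH n u₂ u₂ = -1) (h₁₂ : hH n u₁ u₂ = 0) : False := by
  obtain ⟨p, q, hpq, hlast⟩ :=
    exists_ne_zero_mul_add_mul_eq_zero (u₁ (Fin.last n)) (u₂ (Fin.last n))
  set x := rmul u₁ p + rmul u₂ q
  have h₂₁ : hH n u₂ u₁ = 0 := by rw [← star_hH, h₁₂, star_zero]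
  have hx : hH n x x = -(normSq p + normSq q : ℝ) := by
    simp only [x, hH_add_left, hH_add_right, hH_rmul_left, hH_rmul_right, h₁, h₂, h₁₂, h₂₁]
    simp [← star_mul_self]
    abel
  have hpos : 0 < normSq p + normSq q := by
    contrapose! hpq
    have hp : p = 0 := normSq_le_zero.1 (by linarith [normSq_nonneg (a := q)])
    have hq : q = 0 := normSq_le_zero.1 (by linarith [normSq_nonneg (a := p)])
    simp [hp, hq]
  have := hH_self_re_nonneg_of_last_eq_zero (x := x) hlast
  rw [hx] at this
  simp at this
  linarith

end hH

section Eigenspace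

variable {n : ℕ}

noncomputable def hC (n : ℕ) : QVec n →ₗ⋆[ℂ] QVec n →ₗ[ℂ] ℂ :=
  LinearMap.mk₂'ₛₗ (starRingEnd ℂ) (RingHom.id ℂ) (fun x y => c1 (hH n x y))
    (fun x y z => by rw [hH_add_left, c1_add])
    (fun z x y => by rw [smul_def, hH_rmul_left, star_toQ, c1_toQ_mul]; rfl)
    (fun x y z => by rw [hH_add_right, c1_add])
    (fun z x y => by rw [smul_def, hH_rmul_right, c1_mul_toQ, mul_comm]; rfl)

lemma hC_apply (x y : QVec n) : hC n x y = c1 (hH n x y) := rfl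

lemma hC_isSymm : (hC n).IsSymm := ⟨fun x y => by rw [hC_apply, hC_apply, ← c1_star, star_hH]⟩

open Module.End

variable {J : Module.End ℂ (QVec n)}

lemma apply_eq_rmul_iq_of_mem_eigenspace {x : QVec n} (hx : x ∈ J.eigenspace Complex.I) :
    J x = rmul x iq := by
  rw [(mem_eigenspace_iff.1 hx), smul_def, toQ_I]

/-- `h_ℍ(x,y) = h_ℍ(xi,yi) = -i h_ℍ(x,y) i`, so `h_ℍ(x,y)` commutes with `i`. -/
lemma hH_eq_toQ_hC_of_mem_eigenspace (hJh : ∀ x y, hH n (J x) (J y) = hH n x y) {x y : QVec n}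
    (hx : x ∈ J.eigenspace Complex.I) (hy : y ∈ J.eigenspace Complex.I) :
    hH n x y = toQ (hC n x y) := by
  have h := hJh x y
  rw [apply_eq_rmul_iq_of_mem_eigenspace hx, apply_eq_rmul_iq_of_mem_eigenspace hy,
    hH_rmul_left, hH_rmul_right] at h
  refine eq_toQ_c1_of_commute ?_
  calc iq * hH n x y = iq * (star iq * (hH n x y * iq)) := by rw [h]
    _ = hH n x y * iq := by rw [← mul_assoc, iq_mul_star_iq, one_mul]

lemma rmul_jq_mem_eigenspace (hJj : ∀ x, J (rmul x jq) = rmul (J x) jq) {μ : ℂ} {x : QVec n}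
    (hx : x ∈ J.eigenspace μ) : rmul x jq ∈ J.eigenspace (starRingEnd ℂ μ) := by
  rw [mem_eigenspace_iff, hJj, mem_eigenspace_iff.1 hx, rmul_jq_smul]

/-- `x = ½ (x - i J x) + ½ (x + i J x)`, and right multiplication by `j` swaps the `±i`
eigenspaces of `J`. -/
lemma exists_mem_eigenspace_add_rmul_jq (hJj : ∀ x, J (rmul x jq) = rmul (J x) jq)
    (hJ2 : ∀ x, J (J x) = -x) (x : QVec n) :
    ∃ v ∈ J.eigenspace Complex.I, ∃ w ∈ J.eigenspace Complex.I, v + rmul w jq = x := by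
  have hP : x - Complex.I • J x ∈ J.eigenspace Complex.I := by
    rw [mem_eigenspace_iff, map_sub, map_smul, hJ2, smul_sub, smul_smul, Complex.I_mul_I]
    simp only [neg_smul, one_smul, smul_neg]
    abel
  have hQ : x + Complex.I • J x ∈ J.eigenspace (-Complex.I) := by
    rw [mem_eigenspace_iff, map_add, map_smul, hJ2, smul_add, smul_smul]
    simp only [neg_mul, Complex.I_mul_I, neg_neg, one_smul, neg_smul, smul_neg]
    abel
  have hQj := rmul_jq_mem_eigenspace hJj hQ
  rw [map_neg, Complex.conj_I, neg_neg] at hQj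
  refine ⟨(2⁻¹ : ℂ) • (x - Complex.I • J x), Submodule.smul_mem _ _ hP,
    -(2⁻¹ : ℂ) • rmul (x + Complex.I • J x) jq, Submodule.smul_mem _ _ hQj, ?_⟩
  rw [rmul_jq_smul, rmul_jq_rmul_jq, map_neg, smul_neg, neg_smul, neg_neg, map_inv₀, map_ofNat,
    ← smul_add, sub_add_add_cancel, ← two_smul ℂ x, smul_smul, inv_mul_cancel₀ two_ne_zero,
    one_smul]

lemma eq_zero_of_mem_eigenspace_of_rmul_jq_mem (hJj : ∀ x, J (rmul x jq) = rmul (J x) jq)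
    {w : QVec n} (hw : w ∈ J.eigenspace Complex.I) (hwj : rmul w jq ∈ J.eigenspace Complex.I) :
    w = 0 := by
  have h := mem_eigenspace_iff.1 (rmul_jq_mem_eigenspace hJj hw)
  rw [mem_eigenspace_iff.1 hwj, Complex.conj_I, neg_smul, eq_neg_iff_add_eq_zero, ← two_smul ℂ,
    smul_smul, smul_eq_zero] at h
  have hwj0 : rmul w jq = 0 := h.resolve_left (by simp)
  rw [← neg_neg w, ← rmul_jq_rmul_jq w, hwj0, zero_rmul, neg_zero]

/-- `V × V ≃ ℍ^{n+1}` over `ℝ` via `(v, w) ↦ v + w j`, so `4 dim_ℂ V = 4 (n + 1)`. -/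
lemma finrank_eigenspace_I (hJj : ∀ x, J (rmul x jq) = rmul (J x) jq) (hJ2 : ∀ x, J (J x) = -x) :
    finrank ℂ (J.eigenspace Complex.I) = n + 1 := by
  set V := J.eigenspace Complex.I
  let ι : V →ₗ[ℝ] QVec n := V.subtype.restrictScalars ℝ
  let Φ : (V × V) →ₗ[ℝ] QVec n := ι.coprod ((LinearMap.mulRight ℝ jq).compLeft _ ∘ₗ ι)
  have hΦ : Function.Bijective Φ := by
    refine ⟨(injective_iff_map_eq_zero Φ).2 fun ⟨v, w⟩ h => ?_, fun x => ?_⟩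
    · have hvw : (v : QVec n) + rmul w jq = 0 := h
      have hw : (w : QVec n) = 0 := eq_zero_of_mem_eigenspace_of_rmul_jq_mem hJj w.2
        (by rw [eq_neg_of_add_eq_zero_right hvw]; exact V.neg_mem v.2)
      have hv : (v : QVec n) = 0 := by simpa [hw] using hvw
      simp [Subtype.ext_iff, hv, hw]
    · obtain ⟨v, hv, w, hw, rfl⟩ := exists_mem_eigenspace_add_rmul_jq hJj hJ2 x
      exact ⟨(⟨v, hv⟩, ⟨w, hw⟩), rfl⟩
  have : Module.Finite ℝ V := Module.Finite.of_injective ι Subtype.val_injective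
  have h := (LinearEquiv.ofBijective Φ hΦ).finrank_eq
  rw [finrank_real_qVec, Module.finrank_prod, ← Module.finrank_mul_finrank ℝ ℂ V,
    Complex.finrank_real_complex] at h
  omega

lemma hC_add_rmul_jq_self (hJh : ∀ x y, hH n (J x) (J y) = hH n x y) {v w : QVec n}
    (hv : v ∈ J.eigenspace Complex.I) (hw : w ∈ J.eigenspace Complex.I) :
    hC n (v + rmul w jq) (v + rmul w jq) = hC n v v + starRingEnd ℂ (hC n w w) := by
  have h₁ : hC n v (rmul w jq) = 0 := by
    rw [hC_apply, hH_rmul_right, hH_eq_toQ_hC_of_mem_eigenspace hJh hv hw, c1_toQ_mul_jq]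
  have h₂ : hC n (rmul w jq) v = 0 := by rw [← hC_isSymm.eq, h₁, map_zero]
  have h₃ : hC n (rmul w jq) (rmul w jq) = starRingEnd ℂ (hC n w w) := by
    rw [hC_apply, hH_rmul_left, hH_rmul_right, hH_eq_toQ_hC_of_mem_eigenspace hJh hw hw,
      star_jq_mul_toQ_mul_jq, c1_toQ]
  simp only [map_add, LinearMap.add_apply, h₁, h₂, h₃, add_zero, zero_add]

lemma separatingLeft_hC_eigenspace (hJj : ∀ x, J (rmul x jq) = rmul (J x) jq)
    (hJ2 : ∀ x, J (J x) = -x) (hJh : ∀ x y, hH n (J x) (J y) = hH n x y) :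
    ((hC n).domRestrict₁₂ (J.eigenspace Complex.I) (J.eigenspace Complex.I)).SeparatingLeft := by
  rintro ⟨x, hx⟩ h
  rw [Submodule.mk_eq_zero]
  have hV : ∀ u ∈ J.eigenspace Complex.I, hH n x u = 0 := fun u hu => by
    rw [hH_eq_toQ_hC_of_mem_eigenspace hJh hx hu, show hC n x u = 0 from h ⟨u, hu⟩, toQ_zero]
  refine eq_zero_of_forall_hH_eq_zero fun y => ?_
  obtain ⟨v, hv, w, hw, rfl⟩ := exists_mem_eigenspace_add_rmul_jq hJj hJ2 y
  rw [hH_add_right, hH_rmul_right, hV v hv, hV w hw, zero_mul, add_zero]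

/-- Writing `e_n = v + wj`, `-1 = h_ℂ(e_n,e_n) = h_ℂ(v,v) + conj h_ℂ(w,w)`. -/
lemma exists_re_hC_neg_of_mem_eigenspace (hJj : ∀ x, J (rmul x jq) = rmul (J x) jq)
    (hJ2 : ∀ x, J (J x) = -x) (hJh : ∀ x y, hH n (J x) (J y) = hH n x y) :
    ∃ x : J.eigenspace Complex.I, (hC n x x).re < 0 := by
  obtain ⟨v, hv, w, hw, h⟩ := exists_mem_eigenspace_add_rmul_jq hJj hJ2 (Pi.single (Fin.last n) 1)
  have hsum := congrArg Complex.re (hC_add_rmul_jq_self hJh hv hw)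
  rw [h, hC_apply, hH_single_last, Complex.add_re, Complex.conj_re] at hsum
  by_contra! hnonneg
  have := add_nonneg (hnonneg ⟨v, hv⟩) (hnonneg ⟨w, hw⟩)
  norm_num [← hsum] at this

lemma hC_ne_zero_of_mem_eigenspace (hJh : ∀ x y, hH n (J x) (J y) = hH n x y) {x y : QVec n}
    (hx : x ∈ J.eigenspace Complex.I) (hy : y ∈ J.eigenspace Complex.I)
    (hxx : hC n x x = -1) (hyy : hC n y y = -1) : hC n x y ≠ 0 := fun hxy =>
  not_hH_negative_orthonormal_pair
    (by rw [hH_eq_toQ_hC_of_mem_eigenspace hJh hx hx, hxx, toQ_neg_one])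
    (by rw [hH_eq_toQ_hC_of_mem_eigenspace hJh hy hy, hyy, toQ_neg_one])
    (by rw [hH_eq_toQ_hC_of_mem_eigenspace hJh hx hy, hxy, toQ_zero])

end Eigenspace

open Module.End in
/-- Let `J` be a right `ℍ`-linear complex structure on `ℍ^{n+1}` preserving the quaternionic
Hermitian form `h_ℍ` of signature `(n,1)`, and let `V` be its `i`-eigenspace.  Then the
restriction of `h_ℂ` to `V` is a non-degenerate Hermitian form of signature `(n,1)`: `V` has
a complex basis `f_0, …, f_n` that is `h_ℂ`-orthonormal with `n` plus signs and one minus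
sign. -/
theorem restriction_signature (n : ℕ)
    (J : (Fin (n + 1) → Quaternion ℝ) → (Fin (n + 1) → Quaternion ℝ))
    (hadd : ∀ x y, J (x + y) = J x + J y)
    (hlin : ∀ x q, J (rmul x q) = rmul (J x) q)
    (hsq : ∀ x, J (J x) = -x)
    (hpres : ∀ x y, hH n (J x) (J y) = hH n x y) :
    ∃ f : Fin (n + 1) → (Fin (n + 1) → Quaternion ℝ),
      (∀ k, J (f k) = rmul (f k) iq) ∧
      (∀ v, J v = rmul v iq →
        ∃! c : Fin (n + 1) → ℂ, v = ∑ k, rmul (f k) (toQ (c k))) ∧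
      (∀ k l, c1 (hH n (f k) (f l))
        = if k = l then (if (k : ℕ) < n then 1 else -1) else 0) := by
  let Jℂ : Module.End ℂ (QVec n) :=
    { toFun := J, map_add' := hadd, map_smul' := fun z x => by simp only [smul_def, hlin]; rfl }
  have hJj : ∀ x, Jℂ (rmul x jq) = rmul (Jℂ x) jq := fun x => hlin x jq
  have hJh : ∀ x y, hH n (Jℂ x) (Jℂ y) = hH n x y := hpres
  set V := Jℂ.eigenspace Complex.I
  have hmemV : ∀ v, v ∈ V ↔ J v = rmul v iq := fun v => by
    rw [mem_eigenspace_iff, smul_def, toQ_I]; rfl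
  obtain ⟨b, hb⟩ := (hC_isSymm.domRestrict V).exists_basis_signature_index_one
    (separatingLeft_hC_eigenspace hJj hsq hJh) (finrank_eigenspace_I hJj hsq)
    (exists_re_hC_neg_of_mem_eigenspace hJj hsq hJh)
    (fun x y => hC_ne_zero_of_mem_eigenspace hJh x.2 y.2)
  refine ⟨fun k => b k, fun k => (hmemV _).1 (b k).2, fun v hv => ?_, hb⟩
  have hrepr : ∀ c, v = ∑ k, rmul (b k : QVec n) (toQ (c k)) ↔
      b.equivFun.symm c = ⟨v, (hmemV v).2 hv⟩ := fun c => by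
    rw [Basis.equivFun_symm_apply, Subtype.ext_iff, Submodule.coe_sum, eq_comm]
    simp only [Submodule.coe_smul, smul_def]
  simpa only [hrepr] using b.equivFun.symm.bijective.existsUnique _
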